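/- Let K ⊂ ℂ be a field and let L = θⁿ + Σ aᵢθⁱ with aᵢ ∈ K[[t]], aᵢ(0) = 0, be formally self-adjoint in the sense that the pairing on M_L determined by ⟨η, η⁽ⁱ⁾⟩ = 0 for i < n−1 and ⟨η, η⁽ⁿ⁻¹⁾⟩ = β⁻¹ is horizontal, where β ∈ 1 + tK[[t]] solves n·θβ = 2a_{n−1}β. Then this pairing satisfies ⟨x, y⟩ = (−1)^{n+1}⟨y, x⟩ for all x, y in M_L; i.e., the pairing is symmetric if n is odd and alternating if n is even. -/

import Mathlib

open PowerSeries

/-- The logarithmic derivative `θ = t·d/dt` on formal power series. -/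
noncomputable def theta {K : Type*} [CommRing K] (f : K⟦X⟧) : K⟦X⟧ :=
  PowerSeries.X * PowerSeries.derivative K f

/-!
Horizontality, read as `⟨∇x, y⟩ = θ⟨x, y⟩ - ⟨x, ∇y⟩`, moves derivatives from the left slot to
the right, so a horizontal pairing is determined by its values `⟨η, ·⟩` on the cyclic vector `η`.
Induction on `i` gives `⟨η⁽ⁱ⁾, η⁽ʲ⁾⟩ = (-1)^i β⁻¹` on the antidiagonal `i + j = n - 1` (and `0`
below it); in particular `⟨η⁽ⁿ⁻¹⁾, η⟩ = (-1)^(n-1) ⟨η, η⁽ⁿ⁻¹⁾⟩`. Hence the horizontal pairing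
`⟨x, y⟩ - (-1)^(n+1) ⟨y, x⟩` vanishes on `η`, and therefore everywhere.
-/

section Theta

variable {K : Type*} [CommRing K]

theorem theta_sub (f g : K⟦X⟧) : theta (f - g) = theta f - theta g := by
  simp only [theta, map_sub, mul_sub]

theorem theta_zero : theta (0 : K⟦X⟧) = 0 := by
  simp [theta]

theorem theta_mul (f g : K⟦X⟧) : theta (f * g) = f * theta g + g * theta f := by
  simp only [theta, (derivative K).leibniz, smul_eq_mul]
  ring

theorem theta_neg_one_pow (m : ℕ) : theta ((-1 : K⟦X⟧) ^ m) = 0 := by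
  have : (-1 : K⟦X⟧) ^ m = C ((-1) ^ m) := by rw [map_pow, map_neg, map_one]
  rw [theta, this, derivative_C, mul_zero]

end Theta

section Horizontal

variable {K : Type*} [CommRing K] {M : Type*} [AddCommGroup M] [Module K⟦X⟧ M] {D : M →+ M}

def IsHorizontal (D : M →+ M) (B : M →ₗ[K⟦X⟧] M →ₗ[K⟦X⟧] K⟦X⟧) : Prop :=
  ∀ x y : M, theta (B x y) = B (D x) y + B x (D y)

namespace IsHorizontal

variable {B B' : M →ₗ[K⟦X⟧] M →ₗ[K⟦X⟧] K⟦X⟧}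

theorem apply_map_left (hB : IsHorizontal D B) (x y : M) :
    B (D x) y = theta (B x y) - B x (D y) := by
  rw [hB]; ring

theorem flip (hB : IsHorizontal D B) : IsHorizontal D B.flip := fun x y => by
  simp only [LinearMap.flip_apply, hB y x, add_comm]

theorem sub (hB : IsHorizontal D B) (hB' : IsHorizontal D B') : IsHorizontal D (B - B') :=
  fun x y => by
    simp only [LinearMap.sub_apply, theta_sub, hB x y, hB' x y]
    ring

theorem smul_of_theta_eq_zero (hB : IsHorizontal D B) {s : K⟦X⟧} (hs : theta s = 0) :
    IsHorizontal D (s • B) := fun x y => by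
  simp only [LinearMap.smul_apply, smul_eq_mul, theta_mul, hs, hB x y]
  ring

theorem apply_iterate_iterate (hB : IsHorizontal D B) {e : M} {m : ℕ} {c : K⟦X⟧}
    (hvan : ∀ j < m, B e (D^[j] e) = 0) (hlast : B e (D^[m] e) = c) :
    ∀ i j : ℕ, i + j ≤ m → B (D^[i] e) (D^[j] e) = if i + j = m then (-1) ^ i * c else 0 := by
  intro i
  induction i with
  | zero =>
    intro j _
    simp only [Function.iterate_zero_apply, zero_add, pow_zero, one_mul]
    split_ifs with h
    · exact h ▸ hlast
    · exact hvan j (by omega)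
  | succ i ih =>
    intro j hij
    rw [Function.iterate_succ_apply', hB.apply_map_left, ← Function.iterate_succ_apply' D j,
      ih j (by omega), ih (j + 1) (by omega), if_neg (by omega), theta_zero]
    by_cases h : i + 1 + j = m
    · rw [if_pos h, if_pos (by omega), pow_succ]
      ring
    · rw [if_neg h, if_neg (by omega)]
      ring

theorem iterate_eq_zero (hB : IsHorizontal D B) {e : M} (he : B e = 0) (i : ℕ) :
    B (D^[i] e) = 0 := by
  induction i with
  | zero => exact he
  | succ i ih =>
    ext y
    rw [Function.iterate_succ_apply', hB.apply_map_left, ih]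
    simp [theta_zero]

theorem eq_zero_of_basis_eq_iterate (hB : IsHorizontal D B) {ι : Type*}
    (b : Module.Basis ι K⟦X⟧ M) {e : M} (hb : ∀ i, ∃ k, b i = D^[k] e) (he : B e = 0) :
    B = 0 :=
  b.ext fun i => by
    obtain ⟨k, hk⟩ := hb i
    rw [hk, hB.iterate_eq_zero he k, LinearMap.zero_apply]

end IsHorizontal

end Horizontal

theorem iterate_apply_zero_eq {M : Type*} {n : ℕ} (D : M → M) (v : Fin n → M)
    (hv : ∀ (i : ℕ) (h : i + 1 < n), D (v ⟨i, Nat.lt_of_succ_lt h⟩) = v ⟨i + 1, h⟩) :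
    ∀ (k : ℕ) (hk : k < n), D^[k] (v ⟨0, Nat.zero_lt_of_lt hk⟩) = v ⟨k, hk⟩ := by
  intro k
  induction k with
  | zero => intro _; rfl
  | succ k ih =>
    intro hk
    rw [Function.iterate_succ_apply', ih (by omega), hv k hk]

theorem pairing_parity_general {K : Type*} [Field K] {n : ℕ} (hn : 0 < n)
    (β : K⟦X⟧)
    {M : Type*} [AddCommGroup M] [Module K⟦X⟧ M]
    (b : Module.Basis (Fin n) K⟦X⟧ M) (D : M →+ M)
    (hDb : ∀ (i : ℕ) (h : i + 1 < n), D (b ⟨i, Nat.lt_of_succ_lt h⟩) = b ⟨i + 1, h⟩)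
    (B : M →ₗ[K⟦X⟧] M →ₗ[K⟦X⟧] K⟦X⟧)
    (hhor : ∀ x y : M, theta (B x y) = B (D x) y + B x (D y))
    (hvan : ∀ i : Fin n, (i : ℕ) < n - 1 → B (b ⟨0, hn⟩) (b i) = 0)
    (hlast : B (b ⟨0, hn⟩) (b ⟨n - 1, Nat.sub_lt hn one_pos⟩) = β⁻¹) :
    ∀ x y : M, B x y = (-1) ^ (n + 1) * B y x := by
  have hB : IsHorizontal D B := hhor
  have hb := iterate_apply_zero_eq D b hDb
  have hval := hB.apply_iterate_iterate (e := b ⟨0, hn⟩) (m := n - 1) (c := β⁻¹)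
    (fun j hj => by rw [hb j (by omega)]; exact hvan ⟨j, _⟩ hj)
    (by rw [hb _ (by omega)]; exact hlast)
  have hC : IsHorizontal D (B - (-1 : K⟦X⟧) ^ (n + 1) • B.flip) :=
    hB.sub (hB.flip.smul_of_theta_eq_zero (theta_neg_one_pow _))
  have hC0 : (B - (-1 : K⟦X⟧) ^ (n + 1) • B.flip) (b ⟨0, hn⟩) = 0 := by
    refine b.ext fun j => ?_
    have hrow := hval 0 j (by omega)
    have hcol := hval j 0 (by omega)
    rw [hb j j.2] at hrow hcol
    simp only [Function.iterate_zero, id, zero_add, add_zero, pow_zero, one_mul] at hrow hcol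
    simp only [LinearMap.sub_apply, LinearMap.smul_apply, LinearMap.flip_apply, smul_eq_mul,
      LinearMap.zero_apply, hrow, hcol]
    split_ifs with h
    · rw [← mul_assoc, ← pow_add, (show Even (n + 1 + (j : ℕ)) from ⟨n, by omega⟩).neg_one_pow]
      ring
    · ring
  intro x y
  have := congr($(hC.eq_zero_of_basis_eq_iterate b (fun i => ⟨i, (hb i i.2).symm⟩) hC0) x y)
  simpa [sub_eq_zero] using this

/-- Parity of the polarization: the horizontal pairing on `M_L` determined by
`⟨η, η⁽ⁱ⁾⟩ = 0` for `i < n−1` and `⟨η, η⁽ⁿ⁻¹⁾⟩ = β⁻¹` is `(−1)^{n+1}`-symmetric. -/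
theorem pairing_parity {K : Type*} [Field K] [CharZero K] {n : ℕ} (hn : 0 < n)
    (a : Fin n → K⟦X⟧) (ha : ∀ i, constantCoeff (a i) = 0)
    (β : K⟦X⟧) (hβ1 : constantCoeff β = 1)
    (hβ : (n : K⟦X⟧) * theta β = 2 * a ⟨n - 1, Nat.sub_lt hn one_pos⟩ * β)
    {M : Type*} [AddCommGroup M] [Module K⟦X⟧ M]
    (b : Module.Basis (Fin n) K⟦X⟧ M) (D : M →+ M)
    (hD : ∀ (f : K⟦X⟧) (x : M), D (f • x) = theta f • x + f • D x)
    (hDb : ∀ (i : ℕ) (h : i + 1 < n), D (b ⟨i, Nat.lt_of_succ_lt h⟩) = b ⟨i + 1, h⟩)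
    (hDlast : D (b ⟨n - 1, Nat.sub_lt hn one_pos⟩) = -∑ i : Fin n, a i • b i)
    (B : M →ₗ[K⟦X⟧] M →ₗ[K⟦X⟧] K⟦X⟧)
    (hhor : ∀ x y : M, theta (B x y) = B (D x) y + B x (D y))
    (hvan : ∀ i : Fin n, (i : ℕ) < n - 1 → B (b ⟨0, hn⟩) (b i) = 0)
    (hlast : B (b ⟨0, hn⟩) (b ⟨n - 1, Nat.sub_lt hn one_pos⟩) = β⁻¹) :
    ∀ x y : M, B x y = (-1) ^ (n + 1) * B y x :=
  pairing_parity_general hn β b D hDb B hhor hvan hlast
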